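/- If q : ℕ → [0,1] is nonincreasing with q_j → 0 as j → ∞, ξ = θ = 0, and ρ ∈ (0,1), then the reward T(K) = λ Σ_{j=0}^{K-1} Π_j(K) q_j attains its supremum over K ∈ ℕ at some finite K* (a finite optimal scheduling window exists), since T(K) → λ(1-ρ)Σ_j ρ^j q_j < ∞ and T(1) > 0 when q_0 > 0. -/

import Mathlib

/-!
Write `T(K) = λ (1 - ρ) / (1 - ρ^{K+1}) · ∑_{j<K} ρ^j q_j` and `S = ∑_j ρ^j q_j`, so that
`T(K) → λ (1 - ρ) S`. A sequence converging to `L` attains its supremum as soon as one of its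
terms is at least `L`. Here `T(K) ≥ λ (1 - ρ) S` amounts to the tail `∑_{j ≥ K} ρ^j q_j` being at
most `ρ^{K+1} S`; since `q` is nonincreasing the tail is at most `ρ^K q_K / (1 - ρ)`, and `S ≥ q_0`,
so it suffices that `q_K ≤ ρ (1 - ρ) q_0`, which holds for large `K` because `q_K → 0 < q_0`.
-/

open Filter Topology Finset

theorem exists_forall_le_of_tendsto_of_le {α : Type*} [LinearOrder α] [TopologicalSpace α]
    [ClosedIciTopology α] {a : ℕ → α} {L : α} (ha : Tendsto a atTop (𝓝 L))
    (h : ∃ n, L ≤ a n) : ∃ m, ∀ n, a n ≤ a m := by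
  obtain ⟨n, hn⟩ := h
  by_cases hgt : ∃ m, L < a m
  · obtain ⟨m, hm⟩ := hgt
    refine continuous_of_discreteTopology.exists_forall_ge' m ?_
    rw [cocompact_eq_atTop]
    exact (ha.eventually_lt_const hm).mono fun _ => le_of_lt
  · simp only [not_exists, not_lt] at hgt
    exact ⟨n, fun k => (hgt k).trans hn⟩

noncomputable def mm1kReward (ρ : ℝ) (q : ℕ → ℝ) (K : ℕ) : ℝ :=
  ∑ j ∈ range K, (1 - ρ) * ρ ^ j / (1 - ρ ^ (K + 1)) * q j

section

variable {ρ : ℝ} {q : ℕ → ℝ}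

theorem mm1kReward_eq (K : ℕ) :
    mm1kReward ρ q K = (1 - ρ) / (1 - ρ ^ (K + 1)) * ∑ j ∈ range K, ρ ^ j * q j := by
  rw [mm1kReward, mul_sum]
  exact sum_congr rfl fun j _ => by ring

theorem tendsto_mm1kReward (hρ : |ρ| < 1) (hq : Summable fun j => ρ ^ j * q j) :
    Tendsto (mm1kReward ρ q) atTop (𝓝 ((1 - ρ) * ∑' j, ρ ^ j * q j)) := by
  have hpow : Tendsto (fun K : ℕ => ρ ^ (K + 1)) atTop (𝓝 0) :=
    (tendsto_add_atTop_iff_nat 1).2 (tendsto_pow_atTop_nhds_zero_of_abs_lt_one hρ)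
  have hfactor : Tendsto (fun K : ℕ => (1 - ρ) / (1 - ρ ^ (K + 1))) atTop (𝓝 (1 - ρ)) := by
    have h := (tendsto_const_nhds (x := 1 - ρ)).div
      ((tendsto_const_nhds (x := (1 : ℝ))).sub hpow) (by norm_num)
    rwa [sub_zero, div_one] at h
  simpa only [funext (mm1kReward_eq (ρ := ρ) (q := q))] using
    hfactor.mul hq.hasSum.tendsto_sum_nat

theorem summable_geometric_mul_of_antitone (hρ0 : 0 ≤ ρ) (hρ1 : ρ < 1) (hmono : Antitone q)
    (hq : ∀ j, 0 ≤ q j) : Summable fun j => ρ ^ j * q j :=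
  Summable.of_nonneg_of_le (fun j => mul_nonneg (pow_nonneg hρ0 j) (hq j))
    (fun j => by simpa [mul_comm] using
      mul_le_mul_of_nonneg_right (hmono (Nat.zero_le j)) (pow_nonneg hρ0 j))
    ((summable_geometric_of_lt_one hρ0 hρ1).mul_left (q 0))

theorem tsum_geometric_mul_sub_sum_le (hρ0 : 0 ≤ ρ) (hρ1 : ρ < 1) (hmono : Antitone q)
    (hq : ∀ j, 0 ≤ q j) (K : ℕ) :
    ∑' j, ρ ^ j * q j - ∑ j ∈ range K, ρ ^ j * q j ≤ ρ ^ K * q K / (1 - ρ) := by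
  have hsum := summable_geometric_mul_of_antitone hρ0 hρ1 hmono hq
  have htail : ∑' i, ρ ^ (i + K) * q (i + K) ≤ ∑' i, ρ ^ K * q K * ρ ^ i :=
    Summable.tsum_le_tsum
      (fun i => calc
        ρ ^ (i + K) * q (i + K) ≤ ρ ^ (i + K) * q K :=
          mul_le_mul_of_nonneg_left (hmono (Nat.le_add_left K i)) (pow_nonneg hρ0 _)
        _ = ρ ^ K * q K * ρ ^ i := by ring)
      ((summable_nat_add_iff K).2 hsum) ((summable_geometric_of_lt_one hρ0 hρ1).mul_left _)
  rw [tsum_mul_left, tsum_geometric_of_lt_one hρ0 hρ1, ← div_eq_mul_inv] at htail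
  linarith [hsum.sum_add_tsum_nat_add K]

theorem mul_tsum_le_mm1kReward (hρ0 : 0 ≤ ρ) (hρ1 : ρ < 1) (hmono : Antitone q)
    (hq : ∀ j, 0 ≤ q j) {K : ℕ} (hK : q K ≤ ρ * (1 - ρ) * q 0) :
    (1 - ρ) * ∑' j, ρ ^ j * q j ≤ mm1kReward ρ q K := by
  set S := ∑' j, ρ ^ j * q j
  set P := ∑ j ∈ range K, ρ ^ j * q j
  have hden : 0 < 1 - ρ ^ (K + 1) := sub_pos.2 (pow_lt_one₀ hρ0 hρ1 K.succ_ne_zero)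
  have hS : q 0 ≤ S := by
    simpa using (summable_geometric_mul_of_antitone hρ0 hρ1 hmono hq).le_tsum 0
      fun j _ => mul_nonneg (pow_nonneg hρ0 j) (hq j)
  have htail : S - P ≤ ρ ^ (K + 1) * S :=
    calc S - P ≤ ρ ^ K * q K / (1 - ρ) := tsum_geometric_mul_sub_sum_le hρ0 hρ1 hmono hq K
      _ ≤ ρ ^ K * (ρ * q 0) := by
          rw [div_le_iff₀ (by linarith)]
          nlinarith [pow_nonneg hρ0 K]
      _ ≤ ρ ^ (K + 1) * S := by
          rw [pow_succ, mul_assoc]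
          exact mul_le_mul_of_nonneg_left (mul_le_mul_of_nonneg_left hS hρ0) (pow_nonneg hρ0 K)
  rw [mm1kReward_eq, div_mul_eq_mul_div, le_div_iff₀ hden]
  nlinarith

end

theorem mm1k_finite_optimal_window_general (lam ρ : ℝ) (hlam : 0 < lam)
    (hρ : ρ ∈ Set.Ioo (0:ℝ) 1) (q : ℕ → ℝ)
    (hmono : Antitone q) (hlim : Filter.Tendsto q Filter.atTop (nhds 0))
    (hq0 : 0 < q 0) :
    ∃ Kstar : ℕ, ∀ K : ℕ,
      lam * ∑ j ∈ Finset.range K, (1 - ρ) * ρ ^ j / (1 - ρ ^ (K + 1)) * q j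
        ≤ lam * ∑ j ∈ Finset.range Kstar,
            (1 - ρ) * ρ ^ j / (1 - ρ ^ (Kstar + 1)) * q j := by
  obtain ⟨hρ0, hρ1⟩ := hρ
  have hq : ∀ j, 0 ≤ q j := hmono.le_of_tendsto hlim
  obtain ⟨K, hK⟩ := (hlim.eventually_lt_const
    (by positivity : 0 < ρ * (1 - ρ) * q 0)).exists
  obtain ⟨Kstar, hmax⟩ := exists_forall_le_of_tendsto_of_le
    (tendsto_mm1kReward (abs_lt.2 ⟨by linarith, hρ1⟩)
      (summable_geometric_mul_of_antitone hρ0.le hρ1 hmono hq))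
    ⟨K, mul_tsum_le_mm1kReward hρ0.le hρ1 hmono hq hK.le⟩
  exact ⟨Kstar, fun K => mul_le_mul_of_nonneg_left (hmax K) hlam.le⟩

/-- If `q` is nonincreasing with limit `0`, `q 0 > 0`, and `ξ = θ = 0`, then the
M/M/1/K reward `T(K) = λ ∑_{j<K} Π_j(K) q_j` attains its supremum at some
finite scheduling window `K*`. -/
theorem mm1k_finite_optimal_window (lam ρ : ℝ) (hlam : 0 < lam)
    (hρ : ρ ∈ Set.Ioo (0:ℝ) 1) (q : ℕ → ℝ) (hq : ∀ j, q j ∈ Set.Icc (0:ℝ) 1)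
    (hmono : Antitone q) (hlim : Filter.Tendsto q Filter.atTop (nhds 0))
    (hq0 : 0 < q 0) :
    ∃ Kstar : ℕ, ∀ K : ℕ,
      lam * ∑ j ∈ Finset.range K, (1 - ρ) * ρ ^ j / (1 - ρ ^ (K + 1)) * q j
        ≤ lam * ∑ j ∈ Finset.range Kstar,
            (1 - ρ) * ρ ^ j / (1 - ρ ^ (Kstar + 1)) * q j :=
  mm1k_finite_optimal_window_general lam ρ hlam hρ q hmono hlim hq0
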